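/- arXiv:1112.0159 — 2 statements merged into one kernel-verified Lean document; each statement's English description precedes it below -/
import Mathlib

section
/- Let Q : X → A be a function into a commutative ring A and let T, M be functions from finite subsets of X to A related by the Möbius-type transform T(ϑ) = Σ_{υ⊆ϑ} M(υ)·Q(ϑ∖υ), where Q(κ) = ∏_{x∈κ} Q(x). Then M is recovered from T by the Meyer transform M(υ) = Σ_{ϑ⊆υ} T(ϑ)·(−Q)(υ∖ϑ), where (−Q)(κ) = ∏_{x∈κ}(−Q(x)). -/
/-!
Expanding `T` in the right-hand side and exchanging the two sums, the coefficient of `M τ` is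
`∑_{τ ⊆ ϑ ⊆ υ} Q(ϑ ∖ τ) (−Q)(υ ∖ ϑ) = ∏_{x ∈ υ ∖ τ} (Q x − Q x)`, by expanding the product over
`υ ∖ τ`. This vanishes unless `τ = υ`, when it is the empty product `1`.
-/

open Finset

namespace Finset

theorem sum_Iic_sum_Iic_comm {α M : Type*} [Preorder α] [LocallyFiniteOrder α]
    [LocallyFiniteOrderBot α] [AddCommMonoid M] (c : α) (F : α → α → M) :
    ∑ b ∈ Iic c, ∑ a ∈ Iic b, F a b = ∑ a ∈ Iic c, ∑ b ∈ Icc a c, F a b :=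
  sum_comm' fun b a => by
    simp only [mem_Iic, mem_Icc]
    exact ⟨fun ⟨hbc, hab⟩ => ⟨⟨hab, hbc⟩, hab.trans hbc⟩, fun ⟨⟨hab, hbc⟩, _⟩ => ⟨hbc, hab⟩⟩

variable {X : Type*} [DecidableEq X]

theorem sum_Icc_prod_sdiff_mul_prod_sdiff {R : Type*} [CommSemiring R] (f g : X → R)
    {τ υ : Finset X} (h : τ ⊆ υ) :
    ∑ ϑ ∈ Icc τ υ, (∏ x ∈ ϑ \ τ, f x) * ∏ x ∈ υ \ ϑ, g x = ∏ x ∈ υ \ τ, (f x + g x) := by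
  have union_sdiff_cancel {σ : Finset X} (hσ : σ ∈ (υ \ τ).powerset) : (τ ∪ σ) \ τ = σ :=
    union_sdiff_cancel_left (subset_sdiff.1 (mem_powerset.1 hσ)).2.symm
  rw [prod_add, Icc_eq_image_powerset h, sum_image]
  · refine sum_congr rfl fun σ hσ => ?_
    rw [union_sdiff_cancel hσ, sdiff_sdiff_left, sup_eq_union]
  · intro a ha b hb hab
    rw [← union_sdiff_cancel ha, ← union_sdiff_cancel hb]
    exact congrArg (· \ τ) hab

theorem sum_Icc_prod_sdiff_mul_prod_sdiff_neg {R : Type*} [CommRing R] (f : X → R)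
    {τ υ : Finset X} (h : τ ⊆ υ) :
    ∑ ϑ ∈ Icc τ υ, (∏ x ∈ ϑ \ τ, f x) * ∏ x ∈ υ \ ϑ, -f x = if τ = υ then 1 else 0 := by
  simp only [sum_Icc_prod_sdiff_mul_prod_sdiff _ _ h, add_neg_cancel, prod_const, zero_pow_eq,
    card_eq_zero, sdiff_eq_empty_iff_subset]
  exact if_congr ⟨h.antisymm, fun e => e ▸ Subset.rfl⟩ rfl rfl

end Finset

/-- Q-weighted Möbius/Meyer inversion: if `T(ϑ) = Σ_{υ⊆ϑ} M(υ)·Q^⊗(ϑ∖υ)`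
then `M(υ) = Σ_{ϑ⊆υ} T(ϑ)·(−Q)^⊗(υ∖ϑ)`. -/
theorem meyer_inversion {X : Type*} [DecidableEq X] {A : Type*} [CommRing A]
    (Q : X → A) (T M : Finset X → A)
    (h : ∀ ϑ : Finset X, T ϑ = ∑ υ ∈ ϑ.powerset, M υ * ∏ x ∈ ϑ \ υ, Q x) :
    ∀ υ : Finset X, M υ = ∑ ϑ ∈ υ.powerset, T ϑ * ∏ x ∈ υ \ ϑ, (-Q x) := by
  intro υ
  calc M υ = ∑ τ ∈ Iic υ, M τ * if τ = υ then 1 else 0 := by simp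
    _ = ∑ τ ∈ Iic υ, ∑ ϑ ∈ Icc τ υ, M τ * (∏ x ∈ ϑ \ τ, Q x) * ∏ x ∈ υ \ ϑ, -Q x := by
      refine sum_congr rfl fun τ hτ => ?_
      rw [← sum_Icc_prod_sdiff_mul_prod_sdiff_neg Q (mem_Iic.1 hτ), mul_sum]
      simp only [mul_assoc]
    _ = ∑ ϑ ∈ υ.powerset, T ϑ * ∏ x ∈ υ \ ϑ, (-Q x) := by
      rw [← sum_Iic_sum_Iic_comm, Iic_eq_powerset]
      simp only [h, sum_mul, Iic_eq_powerset]
end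

section
/- Given a kernel T : Finset X → A with values in a commutative ring A and Q : X → A, define the time-dependent Q-Meyer transform M_t(υ) = Σ_{σ⊆υ} T_t(σ)·(−Q)(υ∖σ). Then T_t is recovered as T_t(ϑ) = Σ_{υ⊆ϑ^t} M_t(υ)·Q(ϑ∖υ) whenever T_t is Q-adapted, i.e. T_t(ϑ) = T_t(ϑ^t)·Q(ϑ_[t) where ϑ^t = {x∈ϑ : t(x) < t} and ϑ_[t = ϑ∖ϑ^t. -/
/-!
Writing `υ = σ ∪ s` with `s ⊆ κ ∖ σ`, the expansion of `∏_{κ∖σ} (−Q + Q)`, which vanishes unless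
`σ = κ`, is the sum over `σ ⊆ υ ⊆ κ` of `(−Q)(υ∖σ)·Q(κ∖υ)`. Exchanging the two sums in
`∑_{υ⊆κ} M(υ)·Q(κ∖υ)` therefore kills every `T(σ)` except `T(κ)`: this is Meyer inversion.
Applied to `κ = ϑ^t` and multiplied by `Q(ϑ_[t)`, it recovers `T(ϑ)` by adaptedness.
-/

open Finset

namespace Finset

variable {X A : Type*} [DecidableEq X] [CommSemiring A]

theorem prod_add_sdiff_eq_sum_Icc {σ κ : Finset X} (hσκ : σ ⊆ κ) (f g : X → A) :
    ∏ x ∈ κ \ σ, (f x + g x) = ∑ υ ∈ Icc σ κ, (∏ x ∈ υ \ σ, f x) * ∏ x ∈ κ \ υ, g x := by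
  have hinj : Set.InjOn (σ ∪ ·) ((κ \ σ).powerset : Set (Finset X)) := fun s hs s' hs' h => by
    simp only [coe_powerset, Set.mem_preimage, Set.mem_powerset_iff, coe_subset] at hs hs'
    rw [← union_sdiff_cancel_left (disjoint_of_subset_right hs disjoint_sdiff),
      ← union_sdiff_cancel_left (disjoint_of_subset_right hs' disjoint_sdiff)]
    exact congrArg (· \ σ) h
  rw [prod_add, Icc_eq_image_powerset hσκ, sum_image hinj]
  refine sum_congr rfl fun s hs => ?_
  have hsσ : Disjoint σ s := disjoint_of_subset_right (mem_powerset.mp hs) disjoint_sdiff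
  rw [union_sdiff_cancel_left hsσ, sdiff_sdiff_left]
  rfl

end Finset

section Meyer

variable {X A : Type*} [DecidableEq X] [CommRing A]

def meyerTransform (Q : X → A) (T : Finset X → A) (υ : Finset X) : A :=
  ∑ σ ∈ υ.powerset, T σ * ∏ x ∈ υ \ σ, -Q x

theorem sum_Icc_prod_neg_mul_prod_sdiff {σ κ : Finset X} (hσκ : σ ⊆ κ) (Q : X → A) :
    ∑ υ ∈ Icc σ κ, (∏ x ∈ υ \ σ, -Q x) * ∏ x ∈ κ \ υ, Q x = if σ = κ then 1 else 0 := by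
  rw [← prod_add_sdiff_eq_sum_Icc hσκ]
  split_ifs with h
  · simp [h]
  · obtain ⟨x, hx⟩ := sdiff_nonempty.mpr fun hκσ => h (hσκ.antisymm hκσ)
    exact prod_eq_zero hx (neg_add_cancel (Q x))

theorem sum_meyerTransform_mul_prod_sdiff (Q : X → A) (T : Finset X → A) (κ : Finset X) :
    ∑ υ ∈ κ.powerset, meyerTransform Q T υ * ∏ x ∈ κ \ υ, Q x = T κ := by
  simp only [meyerTransform, sum_mul]
  rw [sum_comm' (t' := κ.powerset) (s' := fun σ => Icc σ κ) (fun υ σ => by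
    simp only [mem_powerset, mem_Icc]
    exact ⟨fun ⟨hυ, hσ⟩ => ⟨⟨hσ, hυ⟩, hσ.trans hυ⟩, fun ⟨⟨hσ, hυ⟩, _⟩ => ⟨hυ, hσ⟩⟩)]
  calc ∑ σ ∈ κ.powerset, ∑ υ ∈ Icc σ κ, T σ * (∏ x ∈ υ \ σ, -Q x) * ∏ x ∈ κ \ υ, Q x
      = ∑ σ ∈ κ.powerset, if σ = κ then T σ else 0 := sum_congr rfl fun σ hσ => by
        simp only [mul_assoc, ← mul_sum, sum_Icc_prod_neg_mul_prod_sdiff (mem_powerset.mp hσ),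
          mul_ite, mul_one, mul_zero]
    _ = T κ := by rw [sum_ite_eq' _ κ, if_pos (mem_powerset_self κ)]

end Meyer

/-- Recovery of a Q-adapted kernel process from its time-dependent Q-Meyer
transform: if `T_t(ϑ) = T_t(ϑ^t)·Q^⊗(ϑ_[t)` and
`M_t(υ) = Σ_{σ⊆υ} T_t(σ)·(−Q)^⊗(υ∖σ)`, then
`T_t(ϑ) = Σ_{υ⊆ϑ^t} M_t(υ)·Q^⊗(ϑ∖υ)`. -/
theorem q_adapted_meyer_recovery {X : Type*} [DecidableEq X] {A : Type*} [CommRing A]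
    (tm : X → ℝ) (Q : X → A) (t : ℝ) (T : Finset X → A)
    (hAdapted : ∀ ϑ : Finset X,
      T ϑ = T (ϑ.filter fun x => tm x < t) *
        ∏ x ∈ ϑ \ (ϑ.filter fun x => tm x < t), Q x)
    (M : Finset X → A)
    (hM : ∀ υ : Finset X, M υ = ∑ σ ∈ υ.powerset, T σ * ∏ x ∈ υ \ σ, (-Q x)) :
    ∀ ϑ : Finset X,
      T ϑ = ∑ υ ∈ (ϑ.filter fun x => tm x < t).powerset,
        M υ * ∏ x ∈ ϑ \ υ, Q x := by
  intro ϑ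
  set κ := ϑ.filter fun x => tm x < t
  have hM : M = meyerTransform Q T := funext hM
  calc T ϑ = T κ * ∏ x ∈ ϑ \ κ, Q x := hAdapted ϑ
    _ = (∑ υ ∈ κ.powerset, M υ * ∏ x ∈ κ \ υ, Q x) * ∏ x ∈ ϑ \ κ, Q x := by
      rw [hM, sum_meyerTransform_mul_prod_sdiff]
    _ = ∑ υ ∈ κ.powerset, M υ * ∏ x ∈ ϑ \ υ, Q x := by
      rw [sum_mul]
      refine sum_congr rfl fun υ hυ => ?_
      have hκυ : κ \ υ ⊆ ϑ \ υ := sdiff_subset_sdiff (filter_subset _ ϑ) le_rfl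
      rw [mul_assoc, ← prod_sdiff hκυ, sdiff_sdiff_sdiff_cancel_right (mem_powerset.mp hυ),
        mul_comm (∏ x ∈ ϑ \ κ, Q x)]
end
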